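/- Let Γ be a group with a normal subgroup M ⊴ Γ and a subgroup K ≤ M with [M : K] < ∞, such that every element of K maps to 0 in H₁(Γ; ℝ), and such that H₁(Γ/M; ℝ) = 0. Then H₁(Γ; ℝ) = 0. -/

import Mathlib

open scoped TensorProduct

/-- `H₁(G; ℝ)`, i.e. the abelianization of `G` tensored (over `ℤ`) with `ℝ`. -/
abbrev H1 (G : Type*) [Group G] : Type _ :=
  (Additive (Abelianization G)) ⊗[ℤ] ℝ

/-- The class `[g]` of a group element in `H₁(G; ℝ)`. -/
noncomputable def H1.cls {G : Type*} [Group G] (g : G) : H1 G :=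
  (Additive.ofMul (Abelianization.of g)) ⊗ₜ[ℤ] (1 : ℝ)

/-- Multiplication by a real scalar on the right tensor factor. -/
noncomputable def H1.sm {A : Type*} [AddCommGroup A] (r : ℝ) :
    A ⊗[ℤ] ℝ →ₗ[ℤ] A ⊗[ℤ] ℝ :=
  LinearMap.lTensor A (r • (LinearMap.id : ℝ →ₗ[ℤ] ℝ))

lemma H1.sm_tmul {A : Type*} [AddCommGroup A] (r : ℝ) (a : A) (b : ℝ) :
    H1.sm r (a ⊗ₜ[ℤ] b) = a ⊗ₜ[ℤ] (r * b) := by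
  simp [H1.sm, smul_eq_mul]
  rfl

lemma H1.sm_add {A : Type*} [AddCommGroup A] (r s : ℝ) :
    (H1.sm (A := A) (r + s)) = H1.sm r + H1.sm s := by
  unfold H1.sm
  rw [add_smul, LinearMap.lTensor_add]
  rfl

lemma H1.sm_zsmul {A : Type*} [AddCommGroup A] (c : ℤ) (r : ℝ) :
    (H1.sm (A := A) (c • r)) = c • H1.sm r := by
  unfold H1.sm
  rw [smul_assoc, LinearMap.lTensor_smul]
  rfl

lemma Abelianization.of_surjective' {G : Type*} [Group G] :
    Function.Surjective (Abelianization.of (G := G)) := fun b =>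
  QuotientGroup.induction_on b fun g => ⟨g, rfl⟩

/-- Let `Γ` be a group with a normal subgroup `M ⊴ Γ` and a subgroup
`K ≤ M` with `[M : K] < ∞`, such that every element of `K` maps to `0` in `H₁(Γ; ℝ)`
and such that `H₁(Γ/M; ℝ) = 0`.  Then `H₁(Γ; ℝ) = 0`. -/
theorem H1_vanishes_of_johnson_type (Γ : Type*) [Group Γ] (M K : Subgroup Γ) [M.Normal]
    (hKM : K ≤ M) (hfin : (K.subgroupOf M).FiniteIndex)
    (hK : ∀ k ∈ K, H1.cls k = 0)
    (hQ : Subsingleton (H1 (Γ ⧸ M))) :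
    Subsingleton (H1 Γ) := by
  classical
  -- Step 1: every element of `M` has trivial class, by the finite-index (transfer) argument.
  have hM : ∀ m ∈ M, H1.cls m = 0 := by
    intro m hm
    obtain ⟨n, hn, -, hnK⟩ :=
      Subgroup.exists_pow_mem_of_index_ne_zero (H := K.subgroupOf M)
        hfin.index_ne_zero ⟨m, hm⟩
    have hmem : m ^ n ∈ K := by
      simpa [Subgroup.mem_subgroupOf] using hnK
    have h0 : H1.cls (m ^ n) = 0 := hK _ hmem
    have h1 : (Additive.ofMul (Abelianization.of m)) ⊗ₜ[ℤ] ((n : ℝ)) = 0 := by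
      have : H1.cls (m ^ n)
          = (Additive.ofMul (Abelianization.of m)) ⊗ₜ[ℤ] ((n : ℝ)) := by
        rw [H1.cls, map_pow, ofMul_pow, TensorProduct.smul_tmul]
        norm_num
      rw [← this, h0]
    have h2 := congrArg (H1.sm ((n : ℝ)⁻¹)) h1
    rw [H1.sm_tmul, map_zero, inv_mul_cancel₀ (by positivity : (n : ℝ) ≠ 0)] at h2
    exact h2
  -- Step 2: the class map `Γ → H1 Γ` factors through `H1 (Γ ⧸ M)`.
  have hcls_mul : ∀ g h : Γ, H1.cls (g * h) = H1.cls g + H1.cls h := by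
    intro g h
    rw [H1.cls, map_mul, ofMul_mul, TensorProduct.add_tmul]
    rfl
  let f : Γ →* Multiplicative (H1 Γ) :=
    MonoidHom.mk' (fun g => Multiplicative.ofAdd (H1.cls g)) (fun g h => hcls_mul g h)
  have hker : ∀ m ∈ M, f m = 1 := by
    intro m hm
    show Multiplicative.ofAdd (H1.cls m) = 1
    rw [hM m hm]
    rfl
  let f' : Γ ⧸ M →* Multiplicative (H1 Γ) := QuotientGroup.lift M f hker
  let f'' : Abelianization (Γ ⧸ M) →* Multiplicative (H1 Γ) := Abelianization.lift f'
  let h : Additive (Abelianization (Γ ⧸ M)) →+ H1 Γ := MonoidHom.toAdditiveLeft f''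
  have hval : ∀ g : Γ,
      h (Additive.ofMul (Abelianization.of (QuotientGroup.mk g : Γ ⧸ M))) = H1.cls g := by
    intro g
    rfl
  -- the bilinear map and its lift
  let B : Additive (Abelianization (Γ ⧸ M)) →ₗ[ℤ] ℝ →ₗ[ℤ] H1 Γ :=
    LinearMap.mk₂ ℤ (fun a r => H1.sm r (h a))
      (fun a b r => by rw [map_add, map_add])
      (fun c a r => by rw [map_zsmul, map_smul])
      (fun a r s => by rw [H1.sm_add]; rfl)
      (fun c a r => by rw [H1.sm_zsmul]; rfl)
  let L : H1 (Γ ⧸ M) →ₗ[ℤ] H1 Γ := TensorProduct.lift B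
  have hzero : ∀ g : Γ, H1.cls g = 0 := by
    intro g
    have h0 : H1.cls (QuotientGroup.mk g : Γ ⧸ M) = 0 := Subsingleton.elim _ _
    have : L (H1.cls (QuotientGroup.mk g : Γ ⧸ M)) = H1.cls g := by
      show H1.sm 1 (h (Additive.ofMul (Abelianization.of (QuotientGroup.mk g : Γ ⧸ M))))
        = H1.cls g
      rw [hval, H1.cls, H1.sm_tmul, mul_one]
    rw [h0, map_zero] at this
    exact this.symm
  -- Step 3: every element of `H1 Γ` is zero.
  have hall : ∀ x : H1 Γ, x = 0 := by
    intro x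
    induction x using TensorProduct.induction_on with
    | zero => rfl
    | tmul a r =>
        obtain ⟨g, hg⟩ := Abelianization.of_surjective' (Additive.toMul a)
        have ha : a = Additive.ofMul (Abelianization.of g) := by
          rw [hg]; rfl
        have : a ⊗ₜ[ℤ] r = H1.sm r (a ⊗ₜ[ℤ] (1 : ℝ)) := by
          rw [H1.sm_tmul, mul_one]
        rw [this, ha]
        rw [show (Additive.ofMul (Abelianization.of g)) ⊗ₜ[ℤ] (1 : ℝ) = H1.cls g from rfl,
          hzero g, map_zero]
    | add x y hx hy => rw [hx, hy, add_zero]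
  exact ⟨fun x y => by rw [hall x, hall y]⟩
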